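/- Gap-pair lower bound for off-ecology excess: in the finite next-token setup, let p be an encoding with p(w₁) = p(w₂) for two states w₁ ≠ w₂, and let D_C be any context law. Then the excess loss satisfies L_D*(p) − H(Y|C,W) ≥ (π(w₁)+π(w₂)) · E_{c∼D_C}[JS_λ(P_{w₁}(·|c), P_{w₂}(·|c))], with λ = π(w₁)/(π(w₁)+π(w₂)). In particular, if P_{w₁}(·|c) ≠ P_{w₂}(·|c) on a set of contexts of positive D_C-measure, the excess is strictly positive. -/

import Mathlib

open Finset

noncomputable def klDiv {V : Type} [Fintype V] (P Q : V → ℝ) : ℝ :=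
  ∑ v, P v * Real.log (P v / Q v)

/-- Two-point weighted Jensen–Shannon divergence. -/
noncomputable def js2 {V : Type} [Fintype V] (l : ℝ) (P Q : V → ℝ) : ℝ :=
  l * klDiv P (fun v => l * P v + (1 - l) * Q v)
    + (1 - l) * klDiv Q (fun v => l * P v + (1 - l) * Q v)

/-- Bayes-optimal next-token loss `L_D*(p) = H(Y | C, p(W))`. -/
noncomputable def bayesOptLoss {W C V X : Type}
    [Fintype W] [Fintype C] [Fintype V] [Fintype X] [DecidableEq X]
    (π : W → ℝ) (DC : C → ℝ) (P : W → C → V → ℝ) (p : W → X) : ℝ :=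
  ∑ c, DC c * ∑ x, ∑ v,
    -((∑ w ∈ Finset.univ.filter (fun w => p w = x), π w * P w c v) *
      Real.log ((∑ w ∈ Finset.univ.filter (fun w => p w = x), π w * P w c v) /
        (∑ w ∈ Finset.univ.filter (fun w => p w = x), π w)))

/-- Irreducible conditional entropy `H(Y|C,W)`. -/
noncomputable def condEntYCW {W C V : Type} [Fintype W] [Fintype C] [Fintype V]
    (π : W → ℝ) (DC : C → ℝ) (P : W → C → V → ℝ) : ℝ :=
  ∑ w, ∑ c, π w * DC c * (∑ v, -(P w c v * Real.log (P w c v)))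

lemma kl_term_le {a b : ℝ} (ha : 0 ≤ a) (hb : 0 < b) :
    a - b ≤ a * Real.log (a / b) := by
  rcases eq_or_lt_of_le ha with h | h
  · simp [← h]; linarith
  · have h1 : Real.log (b / a) ≤ b / a - 1 := Real.log_le_sub_one_of_pos (div_pos hb h)
    rw [Real.log_div hb.ne' h.ne'] at h1
    rw [Real.log_div h.ne' hb.ne']
    have h2 := mul_le_mul_of_nonneg_left h1 ha
    have hba : a * (b / a) = b := by field_simp
    nlinarith

lemma kl_term_lt {a b : ℝ} (ha : 0 ≤ a) (hb : 0 < b) (hab : a ≠ b) :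
    a - b < a * Real.log (a / b) := by
  rcases eq_or_lt_of_le ha with h | h
  · simp [← h]; linarith
  · have hne : b / a ≠ 1 := by
      intro hh
      exact hab ((div_eq_one_iff_eq h.ne').mp hh).symm
    have h1 : Real.log (b / a) < b / a - 1 :=
      Real.log_lt_sub_one_of_pos (div_pos hb h) hne
    rw [Real.log_div hb.ne' h.ne'] at h1
    rw [Real.log_div h.ne' hb.ne']
    have h2 := mul_lt_mul_of_pos_left h1 h
    have hba : a * (b / a) = b := by field_simp
    nlinarith

lemma klDiv_nonneg {V : Type} [Fintype V] {P Q : V → ℝ} (hP : ∀ v, 0 ≤ P v)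
    (hQ : ∀ v, 0 < Q v) (hPs : ∑ v, P v = 1) (hQs : ∑ v, Q v = 1) :
    0 ≤ klDiv P Q := by
  have h : ∑ v, (P v - Q v) ≤ klDiv P Q :=
    Finset.sum_le_sum fun v _ => kl_term_le (hP v) (hQ v)
  rw [Finset.sum_sub_distrib, hPs, hQs] at h
  linarith

lemma klDiv_pos {V : Type} [Fintype V] {P Q : V → ℝ} (hP : ∀ v, 0 ≤ P v)
    (hQ : ∀ v, 0 < Q v) (hPs : ∑ v, P v = 1) (hQs : ∑ v, Q v = 1)
    (hne : P ≠ Q) : 0 < klDiv P Q := by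
  obtain ⟨v₀, hv₀⟩ := Function.ne_iff.mp hne
  have h : ∑ v, (P v - Q v) < klDiv P Q := by
    refine Finset.sum_lt_sum (fun v _ => kl_term_le (hP v) (hQ v)) ⟨v₀, Finset.mem_univ _, ?_⟩
    exact kl_term_lt (hP v₀) (hQ v₀) hv₀
  rw [Finset.sum_sub_distrib, hPs, hQs] at h
  linarith

lemma mix_pos {l a b : ℝ} (hl0 : 0 < l) (hl1 : l < 1) (ha : 0 < a) (hb : 0 < b) :
    0 < l * a + (1 - l) * b := by nlinarith

lemma comp_identity {V : Type} [Fintype V] (l : ℝ) (hl0 : 0 < l) (hl1 : l < 1)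
    (P₁ P₂ Q : V → ℝ) (hP₁ : ∀ v, 0 < P₁ v) (hP₂ : ∀ v, 0 < P₂ v)
    (hQ : ∀ v, 0 < Q v) :
    l * klDiv P₁ Q + (1 - l) * klDiv P₂ Q
      = js2 l P₁ P₂ + klDiv (fun v => l * P₁ v + (1 - l) * P₂ v) Q := by
  unfold js2 klDiv
  rw [Finset.mul_sum, Finset.mul_sum, Finset.mul_sum, Finset.mul_sum,
    ← Finset.sum_add_distrib, ← Finset.sum_add_distrib, ← Finset.sum_add_distrib]
  refine Finset.sum_congr rfl fun v _ => ?_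
  have hM : 0 < l * P₁ v + (1 - l) * P₂ v := mix_pos hl0 hl1 (hP₁ v) (hP₂ v)
  rw [Real.log_div (hP₁ v).ne' (hQ v).ne', Real.log_div (hP₂ v).ne' (hQ v).ne',
    Real.log_div (hP₁ v).ne' hM.ne', Real.log_div (hP₂ v).ne' hM.ne',
    Real.log_div hM.ne' (hQ v).ne']
  ring

lemma js2_nonneg {V : Type} [Fintype V] {l : ℝ} (hl0 : 0 < l) (hl1 : l < 1)
    {P₁ P₂ : V → ℝ} (hP₁ : ∀ v, 0 < P₁ v) (hP₂ : ∀ v, 0 < P₂ v)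
    (hs₁ : ∑ v, P₁ v = 1) (hs₂ : ∑ v, P₂ v = 1) : 0 ≤ js2 l P₁ P₂ := by
  have hM : ∀ v, 0 < l * P₁ v + (1 - l) * P₂ v := fun v => mix_pos hl0 hl1 (hP₁ v) (hP₂ v)
  have hMs : ∑ v, (l * P₁ v + (1 - l) * P₂ v) = 1 := by
    rw [Finset.sum_add_distrib, ← Finset.mul_sum, ← Finset.mul_sum, hs₁, hs₂]; ring
  have h1 := klDiv_nonneg (fun v => (hP₁ v).le) hM hs₁ hMs
  have h2 := klDiv_nonneg (fun v => (hP₂ v).le) hM hs₂ hMs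
  unfold js2
  have : (fun v => l * P₁ v + (1 - l) * P₂ v) = fun v => l * P₁ v + (1 - l) * P₂ v := rfl
  nlinarith

lemma js2_pos {V : Type} [Fintype V] {l : ℝ} (hl0 : 0 < l) (hl1 : l < 1)
    {P₁ P₂ : V → ℝ} (hP₁ : ∀ v, 0 < P₁ v) (hP₂ : ∀ v, 0 < P₂ v)
    (hs₁ : ∑ v, P₁ v = 1) (hs₂ : ∑ v, P₂ v = 1) (hne : P₁ ≠ P₂) :
    0 < js2 l P₁ P₂ := by
  have hM : ∀ v, 0 < l * P₁ v + (1 - l) * P₂ v := fun v => mix_pos hl0 hl1 (hP₁ v) (hP₂ v)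
  have hMs : ∑ v, (l * P₁ v + (1 - l) * P₂ v) = 1 := by
    rw [Finset.sum_add_distrib, ← Finset.mul_sum, ← Finset.mul_sum, hs₁, hs₂]; ring
  have hPM : P₁ ≠ fun v => l * P₁ v + (1 - l) * P₂ v := by
    intro hh
    apply hne
    funext v
    have := congrFun hh v
    have hl' : (1 : ℝ) - l ≠ 0 := by linarith
    nlinarith [congrFun hh v]
  have h1 := klDiv_pos (fun v => (hP₁ v).le) hM hs₁ hMs hPM
  have h2 := klDiv_nonneg (fun v => (hP₂ v).le) hM hs₂ hMs
  unfold js2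
  nlinarith

lemma cell_kl {W V : Type} [Fintype V] (T : Finset W) (π : W → ℝ) (P : W → V → ℝ)
    (hπ : ∀ w ∈ T, 0 < π w) (hP : ∀ w ∈ T, ∀ v, 0 < P w v) :
    (∑ v, -((∑ w ∈ T, π w * P w v) * Real.log ((∑ w ∈ T, π w * P w v) / (∑ w ∈ T, π w))))
      - ∑ w ∈ T, π w * (∑ v, -(P w v * Real.log (P w v)))
    = ∑ w ∈ T, π w * klDiv (P w)
        (fun v => (∑ w' ∈ T, π w' * P w' v) / (∑ w' ∈ T, π w')) := by
  rcases T.eq_empty_or_nonempty with rfl | hT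
  · simp
  · set S : ℝ := ∑ w ∈ T, π w with hS
    set A : V → ℝ := fun v => ∑ w ∈ T, π w * P w v with hA
    have hSpos : 0 < S := Finset.sum_pos hπ hT
    have hApos : ∀ v, 0 < A v :=
      fun v => Finset.sum_pos (fun w hw => mul_pos (hπ w hw) (hP w hw v)) hT
    have hQpos : ∀ v, 0 < A v / S := fun v => div_pos (hApos v) hSpos
    have key : ∀ w ∈ T, π w * klDiv (P w) (fun v => A v / S)
        = π w * (∑ v, P w v * Real.log (P w v)) - π w * (∑ v, P w v * Real.log (A v / S)) := by
      intro w hw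
      unfold klDiv
      rw [← mul_sub, ← Finset.sum_sub_distrib]
      congr 1
      refine Finset.sum_congr rfl fun v _ => ?_
      rw [Real.log_div (hP w hw v).ne' (hQpos v).ne']
      ring
    rw [Finset.sum_congr rfl key, Finset.sum_sub_distrib]
    have h2 : ∑ w ∈ T, π w * (∑ v, P w v * Real.log (A v / S))
        = ∑ v, A v * Real.log (A v / S) := by
      simp_rw [Finset.mul_sum]
      rw [Finset.sum_comm]
      refine Finset.sum_congr rfl fun v _ => ?_
      rw [hA]
      rw [Finset.sum_mul]
      exact Finset.sum_congr rfl fun w _ => by ring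
    rw [h2]
    have h3 : ∑ w ∈ T, π w * (∑ v, -(P w v * Real.log (P w v)))
        = -∑ w ∈ T, π w * (∑ v, P w v * Real.log (P w v)) := by
      simp [mul_neg]
    have h4 : ∑ v, -(A v * Real.log (A v / S)) = -∑ v, A v * Real.log (A v / S) := by
      simp
    rw [h3, h4]
    ring

lemma excess_eq {W C V X : Type} [Fintype W] [Fintype C] [Fintype V] [Fintype X] [DecidableEq X]
    (π : W → ℝ) (DC : C → ℝ) (P : W → C → V → ℝ)
    (hπpos : ∀ w, 0 < π w) (hPpos : ∀ w c v, 0 < P w c v) (p : W → X) :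
    bayesOptLoss π DC P p - condEntYCW π DC P =
      ∑ c, DC c * ∑ x, ∑ w ∈ Finset.univ.filter (fun w => p w = x),
        π w * klDiv (P w c)
          (fun v => (∑ w' ∈ Finset.univ.filter (fun w' => p w' = x), π w' * P w' c v) /
            (∑ w' ∈ Finset.univ.filter (fun w' => p w' = x), π w')) := by
  have hcond : condEntYCW π DC P
      = ∑ c, DC c * ∑ x, ∑ w ∈ Finset.univ.filter (fun w => p w = x),
          π w * (∑ v, -(P w c v * Real.log (P w c v))) := by
    unfold condEntYCW
    rw [Finset.sum_comm]
    refine Finset.sum_congr rfl fun c _ => ?_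
    rw [Finset.mul_sum]
    simp_rw [Finset.mul_sum]
    rw [Finset.sum_fiberwise]
    exact Finset.sum_congr rfl fun w _ => Finset.sum_congr rfl fun v _ => by ring
  rw [hcond]
  unfold bayesOptLoss
  rw [← Finset.sum_sub_distrib]
  refine Finset.sum_congr rfl fun c _ => ?_
  rw [← mul_sub]
  congr 1
  rw [← Finset.sum_sub_distrib]
  refine Finset.sum_congr rfl fun x _ => ?_
  exact cell_kl _ π (fun w => P w c) (fun w _ => hπpos w) (fun w _ v => hPpos w c v)

lemma Q_prob {W V : Type} [Fintype V] (T : Finset W) (hT : T.Nonempty)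
    (π : W → ℝ) (P : W → V → ℝ) (hπ : ∀ w ∈ T, 0 < π w)
    (hP : ∀ w ∈ T, ∀ v, 0 < P w v) (hPsum : ∀ w ∈ T, ∑ v, P w v = 1) :
    (∀ v, 0 < (∑ w' ∈ T, π w' * P w' v) / (∑ w' ∈ T, π w')) ∧
      (∑ v, (∑ w' ∈ T, π w' * P w' v) / (∑ w' ∈ T, π w')) = 1 := by
  have hSpos : 0 < ∑ w' ∈ T, π w' := Finset.sum_pos hπ hT
  constructor
  · intro v
    exact div_pos (Finset.sum_pos (fun w hw => mul_pos (hπ w hw) (hP w hw v)) hT) hSpos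
  · rw [← Finset.sum_div]
    rw [Finset.sum_comm]
    have : ∑ w' ∈ T, ∑ v, π w' * P w' v = ∑ w' ∈ T, π w' := by
      refine Finset.sum_congr rfl fun w hw => ?_
      rw [← Finset.mul_sum, hPsum w hw, mul_one]
    rw [this, div_self hSpos.ne']

lemma cellD_nonneg {W V : Type} [Fintype V] (T : Finset W)
    (π : W → ℝ) (P : W → V → ℝ) (hπ : ∀ w ∈ T, 0 < π w)
    (hP : ∀ w ∈ T, ∀ v, 0 < P w v) (hPsum : ∀ w ∈ T, ∑ v, P w v = 1) :
    0 ≤ ∑ w ∈ T, π w * klDiv (P w)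
        (fun v => (∑ w' ∈ T, π w' * P w' v) / (∑ w' ∈ T, π w')) := by
  rcases T.eq_empty_or_nonempty with rfl | hT
  · simp
  · obtain ⟨hQpos, hQsum⟩ := Q_prob T hT π P hπ hP hPsum
    exact Finset.sum_nonneg fun w hw => mul_nonneg (hπ w hw).le
      (klDiv_nonneg (fun v => (hP w hw v).le) hQpos (hPsum w hw) hQsum)

/-- gap-pair lower bound: if `p` merges two distinct states `w₁, w₂`,
then the excess loss is at least
`(π(w₁)+π(w₂)) E_{c∼D_C}[JS_λ(P_{w₁}(·|c), P_{w₂}(·|c))]`, and it is strictly positive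
whenever the two token laws differ on a context of positive `D_C`-mass. -/
theorem gap_pair_lower_bound {W C V X : Type}
    [Fintype W] [DecidableEq W] [Fintype C] [Fintype V] [Fintype X] [DecidableEq X]
    (π : W → ℝ) (DC : C → ℝ) (P : W → C → V → ℝ)
    (hπpos : ∀ w, 0 < π w) (hπsum : ∑ w, π w = 1)
    (hDCnn : ∀ c, 0 ≤ DC c) (hDCsum : ∑ c, DC c = 1)
    (hPpos : ∀ w c v, 0 < P w c v) (hPsum : ∀ w c, ∑ v, P w c v = 1)
    (p : W → X) (w₁ w₂ : W) (hne : w₁ ≠ w₂) (hmerge : p w₁ = p w₂) :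
    ((π w₁ + π w₂) *
        ∑ c, DC c * js2 (π w₁ / (π w₁ + π w₂)) (P w₁ c) (P w₂ c)
      ≤ bayesOptLoss π DC P p - condEntYCW π DC P) ∧
    ((∃ c, 0 < DC c ∧ P w₁ c ≠ P w₂ c) →
      0 < bayesOptLoss π DC P p - condEntYCW π DC P) := by
  have hs : 0 < π w₁ + π w₂ := add_pos (hπpos w₁) (hπpos w₂)
  set l : ℝ := π w₁ / (π w₁ + π w₂) with hl_def
  have hl0 : 0 < l := div_pos (hπpos w₁) hs
  have hl1 : l < 1 := (div_lt_one hs).mpr (by have := hπpos w₂; linarith)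
  have hw1l : (π w₁ + π w₂) * l = π w₁ := by rw [hl_def]; field_simp
  have hw2l : (π w₁ + π w₂) * (1 - l) = π w₂ := by rw [hl_def]; field_simp; ring
  -- per-context key inequality
  have hkey : ∀ c, (π w₁ + π w₂) * js2 l (P w₁ c) (P w₂ c)
      ≤ ∑ x, ∑ w ∈ Finset.univ.filter (fun w => p w = x),
          π w * klDiv (P w c)
            (fun v => (∑ w' ∈ Finset.univ.filter (fun w' => p w' = x), π w' * P w' c v) /
              (∑ w' ∈ Finset.univ.filter (fun w' => p w' = x), π w')) := by
    intro c
    set x₀ := p w₁ with hx₀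
    set T₀ := Finset.univ.filter (fun w => p w = x₀) with hT₀
    have hw₁T : w₁ ∈ T₀ := by simp [hT₀, hx₀]
    have hw₂T : w₂ ∈ T₀ := by simp [hT₀, ← hmerge]
    have hT₀ne : T₀.Nonempty := ⟨w₁, hw₁T⟩
    obtain ⟨hQpos, hQsum⟩ := Q_prob T₀ hT₀ne π (fun w => P w c)
      (fun w _ => hπpos w) (fun w _ v => hPpos w c v) (fun w _ => hPsum w c)
    set Q : V → ℝ := fun v => (∑ w' ∈ T₀, π w' * P w' c v) / (∑ w' ∈ T₀, π w') with hQ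
    -- step 1: pair bound
    have hpair : ({w₁, w₂} : Finset W) ⊆ T₀ := by
      intro w hw
      rcases Finset.mem_insert.mp hw with rfl | hw
      · exact hw₁T
      · rw [Finset.mem_singleton.mp hw]; exact hw₂T
    have hstep1 : π w₁ * klDiv (P w₁ c) Q + π w₂ * klDiv (P w₂ c) Q
        ≤ ∑ w ∈ T₀, π w * klDiv (P w c) Q := by
      have := Finset.sum_le_sum_of_subset_of_nonneg hpair
        (f := fun w => π w * klDiv (P w c) Q)
        (fun w hw _ => mul_nonneg (hπpos w).le
          (klDiv_nonneg (fun v => (hPpos w c v).le) hQpos (hPsum w c) hQsum))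
      rwa [Finset.sum_pair hne] at this
    -- step 2: compensation
    have hcomp := comp_identity l hl0 hl1 (P w₁ c) (P w₂ c) Q
      (hPpos w₁ c) (hPpos w₂ c) hQpos
    have hMpos : ∀ v, 0 < l * P w₁ c v + (1 - l) * P w₂ c v :=
      fun v => mix_pos hl0 hl1 (hPpos w₁ c v) (hPpos w₂ c v)
    have hMsum : ∑ v, (l * P w₁ c v + (1 - l) * P w₂ c v) = 1 := by
      rw [Finset.sum_add_distrib, ← Finset.mul_sum, ← Finset.mul_sum,
        hPsum w₁ c, hPsum w₂ c]; ring
    have hKLM : 0 ≤ klDiv (fun v => l * P w₁ c v + (1 - l) * P w₂ c v) Q :=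
      klDiv_nonneg (fun v => (hMpos v).le) hQpos hMsum hQsum
    have hstep2 : (π w₁ + π w₂) * js2 l (P w₁ c) (P w₂ c)
        ≤ π w₁ * klDiv (P w₁ c) Q + π w₂ * klDiv (P w₂ c) Q := by
      have e1 : π w₁ * klDiv (P w₁ c) Q + π w₂ * klDiv (P w₂ c) Q
          = (π w₁ + π w₂) * (l * klDiv (P w₁ c) Q + (1 - l) * klDiv (P w₂ c) Q) := by
        rw [mul_add, ← mul_assoc, ← mul_assoc, hw1l, hw2l]
      rw [e1, hcomp]
      nlinarith
    -- step 3: single cell ≤ sum over cells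
    have hcellnn : ∀ x : X, 0 ≤ ∑ w ∈ Finset.univ.filter (fun w => p w = x),
        π w * klDiv (P w c)
          (fun v => (∑ w' ∈ Finset.univ.filter (fun w' => p w' = x), π w' * P w' c v) /
            (∑ w' ∈ Finset.univ.filter (fun w' => p w' = x), π w')) :=
      fun x => cellD_nonneg _ π (fun w => P w c) (fun w _ => hπpos w)
        (fun w _ v => hPpos w c v) (fun w _ => hPsum w c)
    have hstep3 := Finset.single_le_sum (f := fun x => ∑ w ∈ Finset.univ.filter (fun w => p w = x),
        π w * klDiv (P w c)
          (fun v => (∑ w' ∈ Finset.univ.filter (fun w' => p w' = x), π w' * P w' c v) /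
            (∑ w' ∈ Finset.univ.filter (fun w' => p w' = x), π w')))
      (fun x _ => hcellnn x) (Finset.mem_univ x₀)
    calc (π w₁ + π w₂) * js2 l (P w₁ c) (P w₂ c)
        ≤ π w₁ * klDiv (P w₁ c) Q + π w₂ * klDiv (P w₂ c) Q := hstep2
      _ ≤ ∑ w ∈ T₀, π w * klDiv (P w c) Q := hstep1
      _ ≤ _ := by rw [hQ, hT₀]; exact hstep3
  -- assemble
  rw [excess_eq π DC P hπpos hPpos p]
  have hmain : (π w₁ + π w₂) * ∑ c, DC c * js2 l (P w₁ c) (P w₂ c)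
      ≤ ∑ c, DC c * ∑ x, ∑ w ∈ Finset.univ.filter (fun w => p w = x),
          π w * klDiv (P w c)
            (fun v => (∑ w' ∈ Finset.univ.filter (fun w' => p w' = x), π w' * P w' c v) /
              (∑ w' ∈ Finset.univ.filter (fun w' => p w' = x), π w')) := by
    rw [Finset.mul_sum]
    refine Finset.sum_le_sum fun c _ => ?_
    have h := mul_le_mul_of_nonneg_left (hkey c) (hDCnn c)
    nlinarith [h]
  refine ⟨hmain, ?_⟩
  rintro ⟨c₀, hc₀, hPne⟩
  have hjsnn : ∀ c, 0 ≤ js2 l (P w₁ c) (P w₂ c) :=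
    fun c => js2_nonneg hl0 hl1 (hPpos w₁ c) (hPpos w₂ c) (hPsum w₁ c) (hPsum w₂ c)
  have hpos : 0 < ∑ c, DC c * js2 l (P w₁ c) (P w₂ c) := by
    refine Finset.sum_pos' (fun c _ => mul_nonneg (hDCnn c) (hjsnn c)) ⟨c₀, Finset.mem_univ _, ?_⟩
    exact mul_pos hc₀ (js2_pos hl0 hl1 (hPpos w₁ c₀) (hPpos w₂ c₀)
      (hPsum w₁ c₀) (hPsum w₂ c₀) hPne)
  nlinarith [hmain, mul_pos hs hpos]
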